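/- Let μ and ν be distinct strict partitions of n, let r be the largest index with μ_r ≠ ν_r (such r exists and r > 1 since |μ| = |ν|), assume μ_r < ν_r, and set m = r + ν_r. Fix pairs of partitions (α,β) and (α′,β′) such that α₁ = α′₁ = 1 and |α| + |β| = |α′| + |β′| = ν_r + (r − 1). If ℓ(α) > ℓ(α′) and the extension of ν by (α,β) equals the extension of ν by (α′,β′), then ℓ(α) ≥ r and ℓ(α′) ≥ r. -/

import Mathlib

/-- `μ : ℕ → ℕ` represents a partition via its parts `μ 1 ≥ μ 2 ≥ ⋯`; the index `0` is
unused and required to be `0`.  The parts are weakly decreasing and only finitely many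
are nonzero. -/
def IsPartition (μ : ℕ → ℕ) : Prop :=
  μ 0 = 0 ∧ (∀ i, 1 ≤ i → μ (i + 1) ≤ μ i) ∧ {i | μ i ≠ 0}.Finite

/-- The weight `|μ|` of a partition: the sum of its parts. -/
noncomputable def pweight (μ : ℕ → ℕ) : ℕ := ∑ᶠ i, μ i

/-- The length `ℓ(μ)`: the number of nonzero parts. -/
noncomputable def plength (μ : ℕ → ℕ) : ℕ := Set.ncard {i | 1 ≤ i ∧ μ i ≠ 0}

/-- A partition is strict if its nonzero parts are pairwise distinct. -/
def IsStrict (μ : ℕ → ℕ) : Prop := ∀ i j, 1 ≤ i → i < j → μ j ≠ 0 → μ j < μ i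

/-- `(i, j)` is a cell of the Ferrers board of `μ`. -/
def Cell (μ : ℕ → ℕ) (i j : ℕ) : Prop := 1 ≤ i ∧ 1 ≤ j ∧ j ≤ μ i

/-- The Ferrers board of `μ` as a set of cells. -/
def Board (μ : ℕ → ℕ) : Set (ℕ × ℕ) := {p | Cell μ p.1 p.2}

/-- The number of ways to place `k` non-attacking rooks on the Ferrers board of `μ`,
i.e. the number of `k`-element subsets of the board whose cells have pairwise distinct
row indices and pairwise distinct column indices. -/
noncomputable def rookCount (μ : ℕ → ℕ) (k : ℕ) : ℕ :=
  Set.ncard {s : Finset (ℕ × ℕ) | s.card = k ∧ (∀ p ∈ s, Cell μ p.1 p.2) ∧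
    ∀ p ∈ s, ∀ q ∈ s, p ≠ q → p.1 ≠ q.1 ∧ p.2 ≠ q.2}

/-- Rook equivalence of partitions. -/
def RookEquiv (μ ν : ℕ → ℕ) : Prop := ∀ k, rookCount μ k = rookCount ν k

/-- `α` contains `μ` as a pattern: there are strictly increasing functions `f, g` on the
positive integers such that `(i, j)` is a cell of `μ` iff `(f i, g j)` is a cell of `α`. -/
def Contains (α μ : ℕ → ℕ) : Prop :=
  ∃ f g : ℕ → ℕ,
    (∀ i, 1 ≤ i → 1 ≤ f i) ∧ (∀ j, 1 ≤ j → 1 ≤ g j) ∧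
    (∀ i j, 1 ≤ i → i < j → f i < f j) ∧
    (∀ i j, 1 ≤ i → i < j → g i < g j) ∧
    (∀ i j, 1 ≤ i → 1 ≤ j → (Cell μ i j ↔ Cell α (f i) (g j)))

/-- `P_n(μ)`: the set of partitions of `n` containing `μ`. -/
def PnSet (n : ℕ) (μ : ℕ → ℕ) : Set (ℕ → ℕ) :=
  {α | IsPartition α ∧ pweight α = n ∧ Contains α μ}

/-- `P_n(μ, k)`: the members of `P_n(μ)` whose first part is `k + μ 1`. -/
def PnSetK (n : ℕ) (μ : ℕ → ℕ) (k : ℕ) : Set (ℕ → ℕ) :=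
  {α | α ∈ PnSet n μ ∧ α 1 = k + μ 1}

/-- Wilf equivalence of partitions. -/
def WilfEquiv (μ ν : ℕ → ℕ) : Prop :=
  ∀ n, 1 ≤ n → (PnSet n μ).ncard = (PnSet n ν).ncard

/-- The multiplicity of `v` among the parts `μ 1, μ 2, …` of `μ`. -/
noncomputable def partCount (μ : ℕ → ℕ) (v : ℕ) : ℕ := Set.ncard {i | 1 ≤ i ∧ μ i = v}

/-- `γ` is the extension of `ν` by the pair `(α, β)`: `γ` is a partition whose multiset of
nonzero parts is the multiset union of the nonzero parts of `ν + α` and those of `β`. -/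
def IsExtension (ν α β γ : ℕ → ℕ) : Prop :=
  IsPartition γ ∧
  ∀ v, 1 ≤ v → partCount γ v = partCount (fun i => ν i + α i) v + partCount β v

/-- `ν` is the `(i, j)`-transform of `μ`: the board of `ν` is obtained from the board of
`μ` by replacing the subboard of cells weakly southeast of `(i, j)` by its conjugate. -/
def IsTransform (i j : ℕ) (μ ν : ℕ → ℕ) : Prop :=
  IsPartition μ ∧ IsPartition ν ∧ 1 ≤ i ∧ 1 ≤ j ∧
  Board ν = (Board μ \ {p ∈ Board μ | i ≤ p.1 ∧ j ≤ p.2}) ∪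
    (fun p : ℕ × ℕ => (i + (p.2 - j), j + (p.1 - i))) '' {p ∈ Board μ | i ≤ p.1 ∧ j ≤ p.2}

/-- One step: `ν` is an `(i, 1)`-transform of `μ` for some `i`. -/
def TransformRel1 (μ ν : ℕ → ℕ) : Prop := ∃ i, IsTransform i 1 μ ν

/-- `(i, 1)`-equivalence: a finite (possibly empty) sequence of `(i, 1)`-transformations. -/
def TransformEquiv1 : (ℕ → ℕ) → (ℕ → ℕ) → Prop := Relation.ReflTransGen TransformRel1

/-- One step: `ν` is an `(i, j)`-transform of `μ` for some `i, j`. -/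
def TransformRel (μ ν : ℕ → ℕ) : Prop := ∃ i j, IsTransform i j μ ν

/-- Differing by a finite sequence of `(i, j)`-transformations. -/
def TransformEquiv : (ℕ → ℕ) → (ℕ → ℕ) → Prop := Relation.ReflTransGen TransformRel

/-- Row `i` of `μ` is salient if `i + μ i ≥ j + μ j` for some `j > i`. -/
def Salient (μ : ℕ → ℕ) (i : ℕ) : Prop := ∃ j, i < j ∧ j + μ j ≤ i + μ i

/-- The multiplicity of `v` in the multiset `S_μ = {i + μ i : row i of μ is salient}`. -/
noncomputable def salientCount (μ : ℕ → ℕ) (v : ℕ) : ℕ :=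
  Set.ncard {i | 1 ≤ i ∧ Salient μ i ∧ i + μ i = v}

/-- The staircase rank of `μ`: the largest `k` with `μ i ≥ k - i + 1` for `1 ≤ i ≤ k`. -/
noncomputable def staircaseRank (μ : ℕ → ℕ) : ℕ :=
  sSup {k | ∀ i, 1 ≤ i → i ≤ k → k + 1 ≤ μ i + i}

/-- The number of cells of the L in `μ` with corner `p = (i, j)`: the cells `(i, x)` of `μ`
with `x ≥ j` together with the cells `(y, j)` with `1 ≤ y ≤ i`. -/
def LWeight (μ : ℕ → ℕ) (p : ℕ × ℕ) : ℕ := (μ p.1 - p.2) + p.1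

/-- `c` lists the corners of a nested sequence of `k` L's in `μ`: each corner is a cell of
`μ`, and later corners are strictly above and strictly to the right of earlier ones. -/
def IsNested (μ : ℕ → ℕ) {k : ℕ} (c : Fin k → ℕ × ℕ) : Prop :=
  (∀ a, Cell μ (c a).1 (c a).2) ∧
  ∀ a b : Fin k, a < b → (c b).1 < (c a).1 ∧ (c a).2 < (c b).2

/-- `w_k(μ)`: the maximum weight of a sequence of `k` nested L's in `μ`
(`0` if there is no such sequence). -/
noncomputable def nestedLMax (μ : ℕ → ℕ) (k : ℕ) : ℕ :=
  sSup {w | ∃ c : Fin k → ℕ × ℕ, IsNested μ c ∧ ∑ a, LWeight μ (c a) = w}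

/-! Adding a column `α` of ones to the strict partition `ν` raises the part `ν (ℓ(α') + 1)` to
`ν (ℓ(α') + 1) + 1` whenever `ℓ(α') < ℓ(α)`. Adding the shorter column `α'` instead cannot produce
this value: the rows above are raised to strictly larger values and the rows below are not
raised at all. So the value must be a part of `β'`, and strictness of `ν` makes it at least
`ν r + r - ℓ(α')`; together with `|α'| = ℓ(α')` this exceeds the budget `ν r + (r - 1)` unless
`ℓ(α') ≥ r`. -/

namespace IsPartition

variable {f g : ℕ → ℕ}

lemma anti (hf : IsPartition f) {i j : ℕ} (hi : 1 ≤ i) (hij : i ≤ j) : f j ≤ f i := by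
  induction j, hij using Nat.le_induction with
  | base => exact le_rfl
  | succ k hk ih => exact (hf.2.1 k (hi.trans hk)).trans ih

lemma add (hf : IsPartition f) (hg : IsPartition g) : IsPartition (fun i => f i + g i) := by
  refine ⟨by simp [hf.1, hg.1], fun i hi => add_le_add (hf.2.1 i hi) (hg.2.1 i hi), ?_⟩
  refine (hf.2.2.union hg.2.2).subset fun i hi => ?_
  simp only [Set.mem_ofPred_eq, Set.mem_union] at hi ⊢
  omega

lemma ne_zero_iff_le_plength (hf : IsPartition f) {i : ℕ} (hi : 1 ≤ i) :
    f i ≠ 0 ↔ i ≤ plength f := by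
  have hzero : ∃ k, f (k + 1) = 0 := by
    obtain ⟨k, hk⟩ := hf.2.2.bddAbove
    exact ⟨k, by_contra fun h => by have := hk h; omega⟩
  classical
  set k := Nat.find hzero
  have hiff : ∀ j, 1 ≤ j → (f j ≠ 0 ↔ j ≤ k) := fun j hj => by
    constructor
    · intro hfj
      by_contra hjk
      exact hfj (Nat.le_zero.mp ((Nat.find_spec hzero) ▸ hf.anti (by omega) (by omega)))
    · intro hjk
      have := Nat.find_min hzero (m := j - 1) (by omega)
      rwa [Nat.sub_add_cancel hj] at this
  have hset : {j | 1 ≤ j ∧ f j ≠ 0} = Set.Icc 1 k := by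
    ext j
    simp only [Set.mem_ofPred_eq, Set.mem_Icc]
    exact ⟨fun ⟨hj, hfj⟩ => ⟨hj, (hiff j hj).mp hfj⟩, fun ⟨hj, hjk⟩ => ⟨hj, (hiff j hj).mpr hjk⟩⟩
  have hlen : plength f = k := by
    rw [plength, hset, ← Finset.coe_Icc, Set.ncard_coe_finset, Nat.card_Icc, Nat.add_sub_cancel]
  rw [hlen]
  exact hiff i hi

lemma eq_one_iff_le_plength (hf : IsPartition f) (h1 : f 1 ≤ 1) {i : ℕ} (hi : 1 ≤ i) :
    f i = 1 ↔ i ≤ plength f := by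
  have := hf.anti le_rfl hi
  rw [← hf.ne_zero_iff_le_plength hi]
  omega

lemma pweight_eq_plength (hf : IsPartition f) (h1 : f 1 ≤ 1) : pweight f = plength f := by
  have hsupp : Function.support f ⊆ (Finset.Icc 1 (plength f) : Finset ℕ) := fun i hi => by
    have hi1 : 1 ≤ i := Nat.one_le_iff_ne_zero.mpr fun h => hi (h ▸ hf.1)
    simpa [hi1] using (hf.ne_zero_iff_le_plength hi1).mp hi
  rw [pweight, finsum_eq_sum_of_support_subset f hsupp,
    Finset.sum_congr rfl fun i hi => (hf.eq_one_iff_le_plength h1 (Finset.mem_Icc.mp hi).1).mpr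
      (Finset.mem_Icc.mp hi).2]
  simp

lemma partCount_pos (hf : IsPartition f) {i : ℕ} (hi : 1 ≤ i) (hfi : f i ≠ 0) :
    0 < partCount f (f i) :=
  (Set.ncard_pos (hf.2.2.subset fun j (hj : 1 ≤ j ∧ f j = f i) => (hj.2 ▸ hfi : f j ≠ 0))).mpr
    ⟨i, hi, rfl⟩

lemma le_pweight_of_partCount_pos (hf : IsPartition f) {v : ℕ} (hv : 0 < partCount f v) :
    v ≤ pweight f := by
  obtain ⟨i, -, rfl⟩ := Set.nonempty_of_ncard_ne_zero hv.ne'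
  exact single_le_finsum i hf.2.2 fun _ => Nat.zero_le _

end IsPartition

namespace IsStrict

variable {ν : ℕ → ℕ}

lemma anti (hν : IsStrict ν) {i j : ℕ} (hi : 1 ≤ i) (hij : i ≤ j) : ν j ≤ ν i := by
  rcases hij.eq_or_lt with rfl | hlt
  · exact le_rfl
  · by_cases hj : ν j = 0
    · simp [hj]
    · exact (hν i j hi hlt hj).le

lemma add_sub_le (hν : IsStrict ν) {i j : ℕ} (hi : 1 ≤ i) (hij : i ≤ j) (hj : ν j ≠ 0) :
    ν j + (j - i) ≤ ν i := by
  induction j, hij using Nat.le_induction with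
  | base => simp
  | succ k hk ih =>
    have hstep := hν k (k + 1) (hi.trans hk) k.lt_succ_self hj
    have := ih (by omega)
    omega

lemma partCount_add_column_eq_zero (hν : IsStrict ν) {α : ℕ → ℕ} (hα : IsPartition α)
    (h1 : α 1 ≤ 1) (hne : ν (plength α + 1) ≠ 0) :
    partCount (fun i => ν i + α i) (ν (plength α + 1) + 1) = 0 := by
  refine (congrArg Set.ncard (Set.eq_empty_of_forall_notMem ?_)).trans (Set.ncard_empty ℕ)
  rintro x ⟨hx, hsum : ν x + α x = _⟩
  by_cases hxl : x ≤ plength α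
  · have hαx := (hα.eq_one_iff_le_plength h1 hx).mpr hxl
    have := hν x (plength α + 1) hx (by omega) hne
    omega
  · have hαx : α x = 0 := not_not.mp fun h => hxl ((hα.ne_zero_iff_le_plength hx).mp h)
    have := hν.anti (by omega : 1 ≤ plength α + 1) (by omega : plength α + 1 ≤ x)
    omega

end IsStrict

theorem lengths_at_least_r_general (r : ℕ) (μ ν : ℕ → ℕ)
    (hν : IsPartition ν)
    (hνs : IsStrict ν)
    (hlt : μ r < ν r)
    (α β α' β' γ : ℕ → ℕ)
    (hα : IsPartition α)
    (hα' : IsPartition α') (hβ' : IsPartition β')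
    (hk : α 1 = 1) (hk' : α' 1 = 1)
    (hw' : pweight α' + pweight β' = ν r + (r - 1))
    (h : IsExtension ν α β γ) (h' : IsExtension ν α' β' γ)
    (hll : plength α' < plength α) :
    r ≤ plength α ∧ r ≤ plength α' := by
  suffices hr : r ≤ plength α' from ⟨by omega, hr⟩
  by_contra! hshort
  set i := plength α' + 1
  have hνi : ν r + (r - i) ≤ ν i := hνs.add_sub_le (by omega) (by omega) (by omega)
  have hαi : α i = 1 := (hα.eq_one_iff_le_plength hk.le (by omega)).mpr (by omega)
  have hin : 0 < partCount (fun j => ν j + α j) (ν i + 1) := by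
    simpa only [hαi] using (hν.add hα).partCount_pos (i := i) (by omega) (by simp [hαi])
  have hout : partCount (fun j => ν j + α' j) (ν i + 1) = 0 :=
    hνs.partCount_add_column_eq_zero hα' hk'.le (show ν i ≠ 0 by omega)
  have hβ'v : 0 < partCount β' (ν i + 1) := by
    have hγ := h.2 (ν i + 1) (by omega)
    have hγ' := h'.2 (ν i + 1) (by omega)
    omega
  have hβ'w := hβ'.le_pweight_of_partCount_pos hβ'v
  have hα'w := hα'.pweight_eq_plength hk'.le
  omega

theorem lengths_at_least_r (n r m : ℕ) (μ ν : ℕ → ℕ)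
    (hμ : IsPartition μ) (hν : IsPartition ν)
    (hμs : IsStrict μ) (hνs : IsStrict ν)
    (hμn : pweight μ = n) (hνn : pweight ν = n) (hne : μ ≠ ν)
    (hr : μ r ≠ ν r) (hrmax : ∀ j, r < j → μ j = ν j)
    (hlt : μ r < ν r) (hm : m = r + ν r)
    (α β α' β' γ : ℕ → ℕ)
    (hα : IsPartition α) (hβ : IsPartition β)
    (hα' : IsPartition α') (hβ' : IsPartition β')
    (hk : α 1 = 1) (hk' : α' 1 = 1)
    (hw : pweight α + pweight β = ν r + (r - 1))
    (hw' : pweight α' + pweight β' = ν r + (r - 1))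
    (h : IsExtension ν α β γ) (h' : IsExtension ν α' β' γ)
    (hll : plength α' < plength α) :
    r ≤ plength α ∧ r ≤ plength α' :=
  lengths_at_least_r_general r μ ν hν hνs hlt α β α' β' γ hα hα' hβ' hk hk' hw' h h' hll
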